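/- Let P₁,…,P₄ ∈ ℝ², let J be the Jacobian determinant of the associated bilinear map, and let c₂, c₃, c₄ be the corner cross products. The vertex mode ψ̂_{1,1}(x̂,ŷ) = ( (ŷ+1)²(1−ŷ)(x̂+1)·(−(2c₄+c₃)x̂ + 2c₄+3c₃)/128 , (1−x̂)(ŷ+1)(x̂+1)²·((2c₂+c₃)ŷ − (2c₂+3c₃))/128 ) satisfies: (i) its second component vanishes whenever x̂ = ±1 and its first component vanishes whenever ŷ = ±1 (vanishing tangential trace on all four edges of [−1,1]²); (ii) ∇×ψ̂_{1,1}(1,ŷ) = J(1,ŷ)·(1+ŷ)/2 for all ŷ; (iii) ∇×ψ̂_{1,1}(x̂,1) = J(x̂,1)·(1+x̂)/2 for all x̂; (iv) ∇×ψ̂_{1,1}(−1,ŷ) = 0 for all ŷ and ∇×ψ̂_{1,1}(x̂,−1) = 0 for all x̂. -/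

import Mathlib

/-- Entry `B₁₁` of the Jacobian matrix of the bilinear map: `(x₂₁(1−ŷ) + x₃₄(1+ŷ))/4`. -/
noncomputable def B11 (x1 x2 x3 x4 yh : ℝ) : ℝ :=
  ((x2 - x1) * (1 - yh) + (x3 - x4) * (1 + yh)) / 4

/-- Entry `B₁₂`: `(x₄₁(1−x̂) + x₃₂(1+x̂))/4`. -/
noncomputable def B12 (x1 x2 x3 x4 xh : ℝ) : ℝ :=
  ((x4 - x1) * (1 - xh) + (x3 - x2) * (1 + xh)) / 4

/-- Entry `B₂₁`: `(y₂₁(1−ŷ) + y₃₄(1+ŷ))/4`. -/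
noncomputable def B21 (y1 y2 y3 y4 yh : ℝ) : ℝ :=
  ((y2 - y1) * (1 - yh) + (y3 - y4) * (1 + yh)) / 4

/-- Entry `B₂₂`: `(y₄₁(1−x̂) + y₃₂(1+x̂))/4`. -/
noncomputable def B22 (y1 y2 y3 y4 xh : ℝ) : ℝ :=
  ((y4 - y1) * (1 - xh) + (y3 - y2) * (1 + xh)) / 4

/-- The Jacobian determinant `J(x̂,ŷ) = det B(x̂,ŷ)` of the bilinear map. -/
noncomputable def Jdet (x1 x2 x3 x4 y1 y2 y3 y4 xh yh : ℝ) : ℝ :=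
  B11 x1 x2 x3 x4 yh * B22 y1 y2 y3 y4 xh - B12 x1 x2 x3 x4 xh * B21 y1 y2 y3 y4 yh

/-- Scalar curl of a planar vector field: `∇×u = ∂u₂/∂x̂ − ∂u₁/∂ŷ`. -/
noncomputable def scurl (u : ℝ × ℝ → ℝ × ℝ) (z : ℝ × ℝ) : ℝ :=
  deriv (fun t => (u (t, z.2)).2) z.1 - deriv (fun t => (u (z.1, t)).1) z.2

/-- Vertex mode `ψ̂_{0,0}` (corresponding to vertex `P₁`). -/
noncomputable def psi00 (x1 x2 x3 x4 y1 y2 y3 y4 : ℝ) (z : ℝ × ℝ) : ℝ × ℝ :=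
  let c1 := (x2 - x1) * (y4 - y1) - (y2 - y1) * (x4 - x1)
  let c2 := (x3 - x2) * (y1 - y2) - (y3 - y2) * (x1 - x2)
  let c4 := (x1 - x4) * (y3 - y4) - (y1 - y4) * (x3 - x4)
  ((z.2 - 1) ^ 2 * (1 + z.2) * (z.1 - 1) * ((c1 + 2 * c2) * z.1 + 3 * c1 + 2 * c2) / 128,
   -((1 + z.1) * (z.2 - 1) * (z.1 - 1) ^ 2 * ((c1 + 2 * c4) * z.2 + 3 * c1 + 2 * c4)) / 128)

/-- Vertex mode `ψ̂_{0,1}` (corresponding to vertex `P₂`). -/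
noncomputable def psi01 (x1 x2 x3 x4 y1 y2 y3 y4 : ℝ) (z : ℝ × ℝ) : ℝ × ℝ :=
  let c1 := (x2 - x1) * (y4 - y1) - (y2 - y1) * (x4 - x1)
  let c2 := (x3 - x2) * (y1 - y2) - (y3 - y2) * (x1 - x2)
  let c3 := (x4 - x3) * (y2 - y3) - (y4 - y3) * (x2 - x3)
  ((z.2 - 1) ^ 2 * (1 + z.2) * (z.1 + 1) * ((2 * c1 + c2) * z.1 - (2 * c1 + 3 * c2)) / 128,
   (1 - z.1) * (z.2 - 1) * (1 + z.1) ^ 2 * ((c2 + 2 * c3) * z.2 + 3 * c2 + 2 * c3) / 128)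

/-- Vertex mode `ψ̂_{1,1}` (corresponding to vertex `P₃`). -/
noncomputable def psi11 (x1 x2 x3 x4 y1 y2 y3 y4 : ℝ) (z : ℝ × ℝ) : ℝ × ℝ :=
  let c2 := (x3 - x2) * (y1 - y2) - (y3 - y2) * (x1 - x2)
  let c3 := (x4 - x3) * (y2 - y3) - (y4 - y3) * (x2 - x3)
  let c4 := (x1 - x4) * (y3 - y4) - (y1 - y4) * (x3 - x4)
  ((z.2 + 1) ^ 2 * (1 - z.2) * (z.1 + 1) * (-(2 * c4 + c3) * z.1 + 2 * c4 + 3 * c3) / 128,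
   (1 - z.1) * (z.2 + 1) * (z.1 + 1) ^ 2 * ((2 * c2 + c3) * z.2 - (2 * c2 + 3 * c3)) / 128)

/-- Vertex mode `ψ̂_{1,0}` (corresponding to vertex `P₄`). -/
noncomputable def psi10 (x1 x2 x3 x4 y1 y2 y3 y4 : ℝ) (z : ℝ × ℝ) : ℝ × ℝ :=
  let c1 := (x2 - x1) * (y4 - y1) - (y2 - y1) * (x4 - x1)
  let c3 := (x4 - x3) * (y2 - y3) - (y4 - y3) * (x2 - x3)
  let c4 := (x1 - x4) * (y3 - y4) - (y1 - y4) * (x3 - x4)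
  ((z.2 + 1) ^ 2 * (1 - z.2) * (z.1 - 1) * (-(c4 + 2 * c3) * z.1 - (3 * c4 + 2 * c3)) / 128,
   (1 + z.1) * (z.2 + 1) * (z.1 - 1) ^ 2 * (-(2 * c1 + c4) * z.2 + 2 * c1 + 3 * c4) / 128)

/-! Each component of `ψ̂_{1,1}` is the edge cubic `(1−t)(1+t)²` in one variable times a function
of the other, so the tangential traces vanish and the curl is `(x̂+1)(ŷ+1)/128` times a
polynomial that is linear on each edge; the double root at `−1` kills the curl on the edges
`x̂ = −1`, `ŷ = −1`. On the edges `x̂ = 1`, `ŷ = 1` it is compared with `J`, which is bilinear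
and hence the interpolant of its corner values `c_i / 4`. -/

/-- The cross product `(P_next − P) × (P_prev − P)` at a corner `P`; with `P = P_i` it is `c_i`. -/
def cornerCross (xn yn x y xp yp : ℝ) : ℝ :=
  (xn - x) * (yp - y) - (yn - y) * (xp - x)

theorem Jdet_eq_bilinear_interpolation (x1 x2 x3 x4 y1 y2 y3 y4 xh yh : ℝ) :
    Jdet x1 x2 x3 x4 y1 y2 y3 y4 xh yh =
      ((1 - xh) * (1 - yh) * cornerCross x2 y2 x1 y1 x4 y4 +
        (1 + xh) * (1 - yh) * cornerCross x3 y3 x2 y2 x1 y1 +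
        (1 + xh) * (1 + yh) * cornerCross x4 y4 x3 y3 x2 y2 +
        (1 - xh) * (1 + yh) * cornerCross x1 y1 x4 y4 x3 y3) / 16 := by
  simp only [Jdet, B11, B12, B21, B22, cornerCross]
  ring

theorem scurl_of_separable {u : ℝ × ℝ → ℝ × ℝ} {f g h k : ℝ → ℝ}
    (hu : ∀ x y, u (x, y) = (f y * g x, h x * k y)) (z : ℝ × ℝ) :
    scurl u z = deriv h z.1 * k z.2 - deriv f z.2 * g z.1 := by
  simp only [scurl, hu, deriv_mul_const_field]

def edgeCubic (t : ℝ) : ℝ := (1 - t) * (t + 1) ^ 2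

theorem edgeCubic_one : edgeCubic 1 = 0 := by norm_num [edgeCubic]

theorem edgeCubic_neg_one : edgeCubic (-1) = 0 := by norm_num [edgeCubic]

theorem deriv_edgeCubic (t : ℝ) : deriv edgeCubic t = (t + 1) * (1 - 3 * t) := by
  have h : HasDerivAt edgeCubic (-1 * (t + 1) ^ 2 + (1 - t) * (2 * (t + 1) ^ 1 * 1)) t :=
    ((hasDerivAt_id t).const_sub 1).mul (((hasDerivAt_id t).add_const 1).pow 2)
  rw [h.deriv]
  ring

noncomputable def vertexMode11 (c2 c3 c4 : ℝ) (z : ℝ × ℝ) : ℝ × ℝ :=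
  (edgeCubic z.2 * ((z.1 + 1) * (-(2 * c4 + c3) * z.1 + 2 * c4 + 3 * c3) / 128),
   edgeCubic z.1 * ((z.2 + 1) * ((2 * c2 + c3) * z.2 - (2 * c2 + 3 * c3)) / 128))

theorem psi11_eq_vertexMode11 (x1 x2 x3 x4 y1 y2 y3 y4 : ℝ) :
    psi11 x1 x2 x3 x4 y1 y2 y3 y4 =
      vertexMode11 (cornerCross x3 y3 x2 y2 x1 y1) (cornerCross x4 y4 x3 y3 x2 y2)
        (cornerCross x1 y1 x4 y4 x3 y3) := by
  funext z
  simp only [psi11, vertexMode11, edgeCubic, cornerCross, Prod.mk.injEq]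
  constructor <;> ring

theorem scurl_vertexMode11 (c2 c3 c4 xh yh : ℝ) :
    scurl (vertexMode11 c2 c3 c4) (xh, yh) =
      (xh + 1) * (yh + 1) * ((1 - 3 * xh) * ((2 * c2 + c3) * yh - (2 * c2 + 3 * c3)) -
        (1 - 3 * yh) * (-(2 * c4 + c3) * xh + 2 * c4 + 3 * c3)) / 128 := by
  rw [scurl_of_separable (fun _ _ => by dsimp only [vertexMode11]), deriv_edgeCubic,
    deriv_edgeCubic]
  ring

/-- Trace properties of the vertex mode `ψ̂_{1,1}`:
(i) vanishing tangential trace on all four edges of `[−1,1]²`;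
(ii) `∇×ψ̂_{1,1}(1,ŷ) = J(1,ŷ)·(1+ŷ)/2`; (iii) `∇×ψ̂_{1,1}(x̂,1) = J(x̂,1)·(1+x̂)/2`;
(iv) `∇×ψ̂_{1,1}(−1,ŷ) = 0` and `∇×ψ̂_{1,1}(x̂,−1) = 0`. -/
theorem vertex_mode_P3_traces (x1 x2 x3 x4 y1 y2 y3 y4 : ℝ) :
    (∀ yh : ℝ, (psi11 x1 x2 x3 x4 y1 y2 y3 y4 (-1, yh)).2 = 0 ∧
      (psi11 x1 x2 x3 x4 y1 y2 y3 y4 (1, yh)).2 = 0) ∧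
    (∀ xh : ℝ, (psi11 x1 x2 x3 x4 y1 y2 y3 y4 (xh, -1)).1 = 0 ∧
      (psi11 x1 x2 x3 x4 y1 y2 y3 y4 (xh, 1)).1 = 0) ∧
    (∀ yh : ℝ, scurl (psi11 x1 x2 x3 x4 y1 y2 y3 y4) (1, yh) =
      Jdet x1 x2 x3 x4 y1 y2 y3 y4 1 yh * (1 + yh) / 2) ∧
    (∀ xh : ℝ, scurl (psi11 x1 x2 x3 x4 y1 y2 y3 y4) (xh, 1) =
      Jdet x1 x2 x3 x4 y1 y2 y3 y4 xh 1 * (1 + xh) / 2) ∧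
    (∀ yh : ℝ, scurl (psi11 x1 x2 x3 x4 y1 y2 y3 y4) (-1, yh) = 0) ∧
    (∀ xh : ℝ, scurl (psi11 x1 x2 x3 x4 y1 y2 y3 y4) (xh, -1) = 0) := by
  simp only [psi11_eq_vertexMode11, scurl_vertexMode11, Jdet_eq_bilinear_interpolation]
  simp only [vertexMode11, edgeCubic_one, edgeCubic_neg_one, zero_mul, and_self,
    implies_true, true_and]
  refine ⟨fun yh => ?_, fun xh => ?_, fun yh => ?_, fun xh => ?_⟩ <;> ring
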